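/- In the setting of a surjective T-algebra homomorphism ψ from the tropical rational function semifield onto S₁ ⋈ S₂ with ψᵢ = πᵢ ∘ ψ: the congruence variety V(Ker(ψ)) is the disjoint union of V(Ker(ψ₁)) and V(Ker(ψ₂)). -/

import Mathlib

/-!
At a point `x ∈ V(Ker ψ)`, evaluation at `x` identifies every pair of `Ker ψ`. If it separated
some `(a₁, b₁) ∈ Ker ψ₁` and some `(a₂, b₂) ∈ Ker ψ₂`, say with values `u₁ ≠ v₁` and `u₂ ≠ v₂`,
the twisted product `(a₁a₂ + b₁b₂, a₁b₂ + b₁a₂)` would lie in `Ker ψ`; but in max-plus arithmetic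
the term `max u₁ v₁ + max u₂ v₂` occurs in exactly one of `max (u₁ + u₂) (v₁ + v₂)` and
`max (u₁ + v₂) (v₁ + u₂)` and strictly dominates the other side. For disjointness, an `r` with
`ψ r = (τ₁ t, τ₂ 1)`, `t ≠ 1`, takes the value `t` on `V(Ker ψ₁)` and `1` on `V(Ker ψ₂)`.
-/

noncomputable section

open Tropical

/-- The tropical semifield `T = ℝ ∪ {-∞}` with ⊕ = max and ⊙ = +, realized as the
tropicalization of the order dual of `ℝ` with a top element adjoined (so that the
Mathlib min-plus convention becomes max-plus, and `0 = -∞`). -/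
abbrev T : Type := Tropical (WithTop ℝᵒᵈ)

theorem WithTop.min_add_add_lt_min_add_add {α : Type*} [AddCancelCommMonoid α] [LinearOrder α]
    [IsOrderedAddMonoid α] {a b c d : WithTop α} (hab : a < b) (hcd : c < d) :
    min (a + c) (b + d) < min (a + d) (b + c) :=
  (min_le_left _ _).trans_lt <|
    lt_min (WithTop.add_lt_add_left hab.ne_top hcd) (WithTop.add_lt_add_right hcd.ne_top hab)

theorem WithTop.min_add_add_ne_min_add_add {α : Type*} [AddCancelCommMonoid α] [LinearOrder α]
    [IsOrderedAddMonoid α] {a b c d : WithTop α} (hab : a ≠ b) (hcd : c ≠ d) :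
    min (a + c) (b + d) ≠ min (a + d) (b + c) := by
  wlog hab' : a < b generalizing a b
  · rw [min_comm, ne_comm, min_comm]
    exact this hab.symm (hab.lt_or_gt.resolve_left hab')
  wlog hcd' : c < d generalizing c d
  · exact (this hcd.symm (hcd.lt_or_gt.resolve_left hcd')).symm
  exact (min_add_add_lt_min_add_add hab' hcd').ne

theorem Tropical.mul_add_mul_ne_mul_add_mul {α : Type*} [AddCancelCommMonoid α] [LinearOrder α]
    [IsOrderedAddMonoid α] {a₁ b₁ a₂ b₂ : Tropical (WithTop α)} (h₁ : a₁ ≠ b₁)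
    (h₂ : a₂ ≠ b₂) : a₁ * a₂ + b₁ * b₂ ≠ a₁ * b₂ + b₁ * a₂ := fun h =>
  WithTop.min_add_add_ne_min_add_add (untrop_injective.ne h₁) (untrop_injective.ne h₂)
    (by simpa using congrArg untrop h)

/-- The paper's `V(Ker f)`. -/
def congruenceVariety {R X Y β : Type*} (ev : R → X → Y) (f : R → β) : Set X :=
  {x | ∀ a b, f a = f b → ev a x = ev b x}

section
variable {R X Y β γ : Type*}

theorem congruenceVariety_subset_of_ker_subset {ev : R → X → Y} {f : R → β} {g : R → γ}
    (hfg : ∀ a b, f a = f b → g a = g b) : congruenceVariety ev g ⊆ congruenceVariety ev f :=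
  fun _ hx a b hab => hx a b (hfg a b hab)

theorem congruenceVariety_fst_inter_snd_eq_empty {ev : R → X → Y} {f : R → β × γ} {r c d : R}
    (hrc : (f r).1 = (f c).1) (hrd : (f r).2 = (f d).2) (hcd : ∀ x, ev c x ≠ ev d x) :
    congruenceVariety ev (fun a => (f a).1) ∩ congruenceVariety ev (fun a => (f a).2) = ∅ :=
  Set.eq_empty_of_forall_notMem fun x ⟨h₁, h₂⟩ => hcd x ((h₁ r c hrc).symm.trans (h₂ r d hrd))

theorem congruenceVariety_subset_fst_union_snd {α S₁ S₂ : Type*} [CommSemiring R]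
    [AddCancelCommMonoid α] [LinearOrder α] [IsOrderedAddMonoid α]
    [CommSemiring S₁] [CommSemiring S₂]
    (ev : R →+* X → Tropical (WithTop α)) (ψ : R →+* S₁ × S₂) :
    congruenceVariety ev ψ ⊆
      congruenceVariety ev (fun a => (ψ a).1) ∪ congruenceVariety ev (fun a => (ψ a).2) := by
  intro x hx
  by_contra! h
  simp only [congruenceVariety, Set.mem_union, Set.mem_ofPred_eq, not_or, not_forall] at h
  obtain ⟨⟨a₁, b₁, hψ₁, hne₁⟩, a₂, b₂, hψ₂, hne₂⟩ := h
  have hψ : ψ (a₁ * a₂ + b₁ * b₂) = ψ (a₁ * b₂ + b₁ * a₂) := by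
    ext <;> simp [hψ₁, hψ₂, add_comm]
  have hev := hx _ _ hψ
  simp only [map_add, map_mul, Pi.add_apply, Pi.mul_apply] at hev
  exact Tropical.mul_add_mul_ne_mul_add_mul hne₁ hne₂ hev
end

theorem T.exists_ne_zero_ne_one : ∃ t : T, t ≠ 0 ∧ t ≠ 1 :=
  ⟨trop ((OrderDual.toDual (1 : ℝ) : ℝᵒᵈ) : WithTop ℝᵒᵈ), by simp [← untrop_injective.ne_iff],
    by simp [← untrop_injective.ne_iff]⟩

theorem congruence_variety_disjoint_union_general (n : ℕ)
    (R : Type*) [CommSemiring R]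
    (ev : R →+* ((Fin n → ℝ) → T))
    (τR : T →+* R) (hconst : ∀ t : T, ev (τR t) = fun _ => t)
    (S₁ S₂ : Type*) [CommSemiring S₁] [CommSemiring S₂]
    (τ₁ : T →+* S₁) (τ₂ : T →+* S₂)
    (hτ₁ : Function.Injective τ₁) (hτ₂ : Function.Injective τ₂)
    (ψ : R →+* S₁ × S₂) (hψτ : ∀ t : T, ψ (τR t) = (τ₁ t, τ₂ t))
    (hsurj : ∀ p : S₁ × S₂, ((p.1 ≠ 0 ∧ p.2 ≠ 0) ∨ p = 0) → ∃ r : R, ψ r = p) :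
    {x : Fin n → ℝ | ∀ a b : R, ψ a = ψ b → ev a x = ev b x} =
      {x : Fin n → ℝ | ∀ a b : R, (ψ a).1 = (ψ b).1 → ev a x = ev b x} ∪
        {x : Fin n → ℝ | ∀ a b : R, (ψ a).2 = (ψ b).2 → ev a x = ev b x} ∧
    {x : Fin n → ℝ | ∀ a b : R, (ψ a).1 = (ψ b).1 → ev a x = ev b x} ∩
      {x : Fin n → ℝ | ∀ a b : R, (ψ a).2 = (ψ b).2 → ev a x = ev b x} = ∅ := by
  obtain ⟨t, ht₀, ht₁⟩ := T.exists_ne_zero_ne_one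
  obtain ⟨r, hr⟩ := hsurj (τ₁ t, τ₂ 1)
    (Or.inl ⟨(map_ne_zero_iff τ₁ hτ₁).2 ht₀, (map_ne_zero_iff τ₂ hτ₂).2 one_ne_zero⟩)
  refine ⟨(congruenceVariety_subset_fst_union_snd ev ψ).antisymm (Set.union_subset
    (congruenceVariety_subset_of_ker_subset fun _ _ h => congrArg Prod.fst h)
    (congruenceVariety_subset_of_ker_subset fun _ _ h => congrArg Prod.snd h)), ?_⟩
  refine congruenceVariety_fst_inter_snd_eq_empty (c := τR t) (d := τR 1)
    (by rw [hr, hψτ]) (by rw [hr, hψτ]) fun x => ?_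
  simpa only [hconst] using ht₁

/-- Let `ψ` be a surjective `T`-algebra homomorphism from the tropical rational function
semifield in `n` variables (whose elements are functions `ℝⁿ → T`, modeled by a
commutative semiring `R` with an injective evaluation homomorphism `ev` into the
semiring of functions, under which the `T`-algebra structure `τR` is by constants)
onto the pseudodirect product `S₁ ⋈ S₂` of semifields over `T`, and let `ψᵢ = πᵢ ∘ ψ`.
Then the congruence variety `V(Ker ψ)` is the disjoint union of `V(Ker ψ₁)` and
`V(Ker ψ₂)`. -/
theorem congruence_variety_disjoint_union (n : ℕ)
    (R : Type*) [CommSemiring R]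
    (ev : R →+* ((Fin n → ℝ) → T)) (hev : Function.Injective ev)
    (τR : T →+* R) (hconst : ∀ t : T, ev (τR t) = fun _ => t)
    (S₁ S₂ : Type*) [CommSemiring S₁] [CommSemiring S₂]
    (τ₁ : T →+* S₁) (τ₂ : T →+* S₂)
    (hτ₁ : Function.Injective τ₁) (hτ₂ : Function.Injective τ₂)
    (hinv₁ : ∀ a : S₁, a ≠ 0 → ∃ b, a * b = 1)
    (hinv₂ : ∀ a : S₂, a ≠ 0 → ∃ b, a * b = 1)
    (ψ : R →+* S₁ × S₂) (hψτ : ∀ t : T, ψ (τR t) = (τ₁ t, τ₂ t))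
    (hrange : ∀ r : R, ((ψ r).1 ≠ 0 ∧ (ψ r).2 ≠ 0) ∨ ψ r = 0)
    (hsurj : ∀ p : S₁ × S₂, ((p.1 ≠ 0 ∧ p.2 ≠ 0) ∨ p = 0) → ∃ r : R, ψ r = p) :
    {x : Fin n → ℝ | ∀ a b : R, ψ a = ψ b → ev a x = ev b x} =
      {x : Fin n → ℝ | ∀ a b : R, (ψ a).1 = (ψ b).1 → ev a x = ev b x} ∪
        {x : Fin n → ℝ | ∀ a b : R, (ψ a).2 = (ψ b).2 → ev a x = ev b x} ∧
    {x : Fin n → ℝ | ∀ a b : R, (ψ a).1 = (ψ b).1 → ev a x = ev b x} ∩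
      {x : Fin n → ℝ | ∀ a b : R, (ψ a).2 = (ψ b).2 → ev a x = ev b x} = ∅ :=
  congruence_variety_disjoint_union_general n R ev τR hconst S₁ S₂ τ₁ τ₂ hτ₁ hτ₂ ψ hψτ hsurj
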